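/- Let Q be a divisible commutative quantale and a ≤ b in Q. Then the map x ↦ a ⊗_b x from [⊥, b] to [⊥, a] preserves the slice multiplication: for all x, y ≤ b, a ⊗_b (x ⊗_b y) = (a ⊗_b x) ⊗_a (a ⊗_b y), where u ⊗_c v := c ⊗ (c ⧵ u) ⊗ (c ⧵ v). -/

import Mathlib

/-! Divisibility makes `c ⧵ u` an exact quotient: `c * (c ⧵ u) = u` for `u ≤ c`. Hence
`u ⊗_c v = u * (c ⧵ v)`, so `a ⊗_b x = a * (b ⧵ x)`, and both sides of the identity reduce to
`a * (b ⧵ x) * (b ⧵ y)`: on the left because `b ⧵ a` cancels against `b`, on the right because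
`a ⧵ (a * (b ⧵ y))` cancels against `a`. -/

/-- Residuation in a quantale: `a ⧵ b = sSup {c | a * c ≤ b}`. -/
def res {Q : Type*} [Mul Q] [CompleteLattice Q] (a b : Q) : Q := sSup {c | a * c ≤ b}

/-- The smooth slice multiplication on `[⊥, c]`: `u ⊗_c v = c * (c ⧵ u) * (c ⧵ v)`. -/
def smul {Q : Type*} [Mul Q] [CompleteLattice Q] (c u v : Q) : Q := c * res c u * res c v

def IsDivisible (Q : Type*) [Mul Q] [LE Q] : Prop :=
  ∀ a b : Q, a ≤ b → ∃ c, a = b * c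

theorem smul_swap {Q : Type*} [CommSemigroup Q] [CompleteLattice Q] (c u v : Q) :
    smul c u v = smul c v u := by
  simp only [smul, mul_right_comm]

section

variable {Q : Type*} [CommSemigroup Q] [CompleteLattice Q] [IsQuantale Q] {c u v : Q}

theorem le_res_iff {w : Q} : w ≤ res c u ↔ c * w ≤ u :=
  Quantale.rightMulResiduation_le_iff_mul_le

theorem mul_res_le (c u : Q) : c * res c u ≤ u :=
  le_res_iff.mp le_rfl

theorem smul_le_right (hu : u ≤ c) (v : Q) : smul c u v ≤ v :=
  calc smul c u v = res c u * c * res c v := by rw [smul, mul_comm c]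
    _ ≤ u * res c v := by grw [mul_comm _ c, mul_res_le]
    _ ≤ c * res c v := by grw [hu]
    _ ≤ v := mul_res_le c v

theorem smul_le_left (hv : v ≤ c) (u : Q) : smul c u v ≤ u :=
  smul_swap c u v ▸ smul_le_right hv u

namespace IsDivisible

variable (hQ : IsDivisible Q)
include hQ

theorem mul_res_of_le (hu : u ≤ c) : c * res c u = u := by
  obtain ⟨w, rfl⟩ := hQ u c hu
  exact le_antisymm (mul_res_le c _) (mul_le_mul_right (le_res_iff.mpr le_rfl) c)

theorem smul_eq_mul_res (hu : u ≤ c) (v : Q) : smul c u v = u * res c v := by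
  rw [smul, hQ.mul_res_of_le hu]

theorem smul_eq_res_mul (hv : v ≤ c) (u : Q) : smul c u v = res c u * v := by
  rw [smul_swap, hQ.smul_eq_mul_res hv, mul_comm]

end IsDivisible

end

/-- In a divisible commutative quantale, for `a ≤ b` the map `x ↦ a ⊗_b x` from
`[⊥, b]` to `[⊥, a]` preserves the slice multiplication. -/
theorem smooth_slice_map_mul {Q : Type*} [CommSemigroup Q] [CompleteLattice Q] [IsQuantale Q]
    (hdiv : ∀ a b : Q, a ≤ b → ∃ c, a = b * c)
    {a b : Q} (hab : a ≤ b) :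
    ∀ x y : Q, x ≤ b → y ≤ b →
      smul b a (smul b x y) = smul a (smul b a x) (smul b a y) := by
  intro x y hx hy
  have hQ : IsDivisible Q := hdiv
  have hax : smul b a x = a * res b x := hQ.smul_eq_mul_res hab x
  have hay : smul b a y = a * res b y := hQ.smul_eq_mul_res hab y
  have hax_le : a * res b x ≤ a := hax ▸ smul_le_left hx a
  have hay_le : a * res b y ≤ a := hay ▸ smul_le_left hy a
  calc smul b a (smul b x y) = res b a * (b * res b x * res b y) :=
        hQ.smul_eq_res_mul ((smul_le_right hx y).trans hy) a
    _ = b * res b a * res b x * res b y := by ac_rfl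
    _ = res b x * (a * res a (a * res b y)) := by
        rw [hQ.mul_res_of_le hab, hQ.mul_res_of_le hay_le]; ac_rfl
    _ = smul a (a * res b x) (a * res b y) := by
        rw [hQ.smul_eq_mul_res hax_le, mul_assoc, mul_left_comm]
    _ = smul a (smul b a x) (smul b a y) := by rw [hax, hay]
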